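/- For every Y ∈ ℝ and K⁺, K⁻ ∈ ℝⁿ, taking u = K⁺·Y·1{Y ≥ 0} + K⁻·Y·1{Y < 0} (so Y' = sY + P'u), the random variable q is integrable and E[q] = ρ'²s²·Y² + (2ρ's·α⁺(K⁺) + β⁺(K⁺))·Y²·1{Y ≥ 0} + (2ρ's·α⁻(K⁻) + β⁻(K⁻))·Y²·1{Y < 0}. -/

import Mathlib

/-!
Write `Z = s + P'K`. Under the policy `u`, `Y' = Y·Z` with `K = K⁺` when `Y ≥ 0`, and
`Y' = (-Y)·(-Z)` with `K = K⁻` when `Y < 0`. Since `q` is a positively 2-homogeneous function of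
`Y'`, this gives `q = Y²·q(±Z)`, and `q(-Z)` is `q(Z)` with the indicator half-lines swapped,
which is why `α⁻, β⁻` use `{Z ≤ 0}, {Z > 0}`. Splitting `Z² = s·Z + Z·P'K` on each half-line
turns `E[q(±Z)]` into `ρ'²s² + 2ρ's·α^±(K) + β^±(K)`. Every term is integrable because `P'K` is
square integrable and the indicators are bounded.
-/

open MeasureTheory

/-- The random variable `m = ρ'Y' + a⁺Y'·1{Y' ≥ 0} + a⁻Y'·1{Y' < 0}`,
where `Y' = sY + P'u`. -/
noncomputable def mRV {Ω : Type*} {n : ℕ} (P : Ω → EuclideanSpace ℝ (Fin n))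
    (s ρ' ap am : ℝ) (Y : ℝ) (u : EuclideanSpace ℝ (Fin n)) (ω : Ω) : ℝ :=
  let Y' : ℝ := s * Y + inner ℝ (P ω) u
  ρ' * Y' + ap * Y' * (if 0 ≤ Y' then (1:ℝ) else 0) +
    am * Y' * (if Y' < 0 then (1:ℝ) else 0)

/-- The random variable `q = ρ'²Y'² + (2ρ'a⁺+b⁺)Y'²·1{Y' ≥ 0} + (2ρ'a⁻+b⁻)Y'²·1{Y' < 0}`,
where `Y' = sY + P'u`. -/
noncomputable def qRV {Ω : Type*} {n : ℕ} (P : Ω → EuclideanSpace ℝ (Fin n))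
    (s ρ' ap am bp bm : ℝ) (Y : ℝ) (u : EuclideanSpace ℝ (Fin n)) (ω : Ω) : ℝ :=
  let Y' : ℝ := s * Y + inner ℝ (P ω) u
  ρ' ^ 2 * Y' ^ 2 + (2 * ρ' * ap + bp) * Y' ^ 2 * (if 0 ≤ Y' then (1:ℝ) else 0) +
    (2 * ρ' * am + bm) * Y' ^ 2 * (if Y' < 0 then (1:ℝ) else 0)

/-- `α⁺(K) = ρ'E[P']K + E[a⁺(s+P'K)·1{s+P'K ≥ 0}] + E[a⁻(s+P'K)·1{s+P'K < 0}]`. -/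
noncomputable def alphaPlus {Ω : Type*} [MeasurableSpace Ω] (ℙ : Measure Ω) {n : ℕ}
    (P : Ω → EuclideanSpace ℝ (Fin n)) (s ρ' ap am : ℝ)
    (K : EuclideanSpace ℝ (Fin n)) : ℝ :=
  let pk : Ω → ℝ := fun ω => inner ℝ (P ω) K
  ρ' * (∫ ω, pk ω ∂ℙ) +
  (∫ ω, ap * (s + pk ω) * (if 0 ≤ s + pk ω then (1:ℝ) else 0) ∂ℙ) +
  (∫ ω, am * (s + pk ω) * (if s + pk ω < 0 then (1:ℝ) else 0) ∂ℙ)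

/-- `α⁻(K) = ρ'E[P']K + E[a⁺(s+P'K)·1{s+P'K ≤ 0}] + E[a⁻(s+P'K)·1{s+P'K > 0}]`. -/
noncomputable def alphaMinus {Ω : Type*} [MeasurableSpace Ω] (ℙ : Measure Ω) {n : ℕ}
    (P : Ω → EuclideanSpace ℝ (Fin n)) (s ρ' ap am : ℝ)
    (K : EuclideanSpace ℝ (Fin n)) : ℝ :=
  let pk : Ω → ℝ := fun ω => inner ℝ (P ω) K
  ρ' * (∫ ω, pk ω ∂ℙ) +
  (∫ ω, ap * (s + pk ω) * (if s + pk ω ≤ 0 then (1:ℝ) else 0) ∂ℙ) +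
  (∫ ω, am * (s + pk ω) * (if 0 < s + pk ω then (1:ℝ) else 0) ∂ℙ)

/-- The piecewise-linear feedback policy `u = K⁺·Y·1{Y ≥ 0} + K⁻·Y·1{Y < 0}`. -/
noncomputable def uPol {n : ℕ} (Y : ℝ) (Kp Km : EuclideanSpace ℝ (Fin n)) :
    EuclideanSpace ℝ (Fin n) :=
  (Y * (if 0 ≤ Y then (1:ℝ) else 0)) • Kp + (Y * (if Y < 0 then (1:ℝ) else 0)) • Km

/-- `β⁺(K) = ρ'²K'E[PP']K + 2ρ'E[a⁺(s+P'K)(P'K)·1{s+P'K ≥ 0}]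
+ 2ρ'E[a⁻(s+P'K)(P'K)·1{s+P'K < 0}] + E[b⁺(s+P'K)²·1{s+P'K ≥ 0}]
+ E[b⁻(s+P'K)²·1{s+P'K < 0}]`, with `K'E[PP']K = E[(P'K)²]`. -/
noncomputable def betaPlus {Ω : Type*} [MeasurableSpace Ω] (ℙ : Measure Ω) {n : ℕ}
    (P : Ω → EuclideanSpace ℝ (Fin n)) (s ρ' ap am bp bm : ℝ)
    (K : EuclideanSpace ℝ (Fin n)) : ℝ :=
  let pk : Ω → ℝ := fun ω => inner ℝ (P ω) K
  ρ' ^ 2 * (∫ ω, (pk ω) ^ 2 ∂ℙ) +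
  2 * ρ' * (∫ ω, ap * (s + pk ω) * pk ω * (if 0 ≤ s + pk ω then (1:ℝ) else 0) ∂ℙ) +
  2 * ρ' * (∫ ω, am * (s + pk ω) * pk ω * (if s + pk ω < 0 then (1:ℝ) else 0) ∂ℙ) +
  (∫ ω, bp * (s + pk ω) ^ 2 * (if 0 ≤ s + pk ω then (1:ℝ) else 0) ∂ℙ) +
  (∫ ω, bm * (s + pk ω) ^ 2 * (if s + pk ω < 0 then (1:ℝ) else 0) ∂ℙ)

/-- `β⁻(K) = ρ'²K'E[PP']K + 2ρ'E[a⁺(s+P'K)(P'K)·1{s+P'K ≤ 0}]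
+ 2ρ'E[a⁻(s+P'K)(P'K)·1{s+P'K > 0}] + E[b⁺(s+P'K)²·1{s+P'K ≤ 0}]
+ E[b⁻(s+P'K)²·1{s+P'K > 0}]`, with `K'E[PP']K = E[(P'K)²]`. -/
noncomputable def betaMinus {Ω : Type*} [MeasurableSpace Ω] (ℙ : Measure Ω) {n : ℕ}
    (P : Ω → EuclideanSpace ℝ (Fin n)) (s ρ' ap am bp bm : ℝ)
    (K : EuclideanSpace ℝ (Fin n)) : ℝ :=
  let pk : Ω → ℝ := fun ω => inner ℝ (P ω) K
  ρ' ^ 2 * (∫ ω, (pk ω) ^ 2 ∂ℙ) +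
  2 * ρ' * (∫ ω, ap * (s + pk ω) * pk ω * (if s + pk ω ≤ 0 then (1:ℝ) else 0) ∂ℙ) +
  2 * ρ' * (∫ ω, am * (s + pk ω) * pk ω * (if 0 < s + pk ω then (1:ℝ) else 0) ∂ℙ) +
  (∫ ω, bp * (s + pk ω) ^ 2 * (if s + pk ω ≤ 0 then (1:ℝ) else 0) ∂ℙ) +
  (∫ ω, bm * (s + pk ω) ^ 2 * (if 0 < s + pk ω then (1:ℝ) else 0) ∂ℙ)

open scoped RealInnerProductSpace

section

variable {Ω : Type*} [MeasurableSpace Ω] {μ : Measure Ω} {X χ χ' : Ω → ℝ}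

lemma integrable_mul_mul_of_memLp_two [IsFiniteMeasure μ] {f g : Ω → ℝ} (hf : MemLp f 2 μ)
    (hg : MemLp g 2 μ) (hχ : Measurable χ) (hχ1 : ∀ ω, |χ ω| ≤ 1) :
    Integrable (fun ω => f ω * g ω * χ ω) μ :=
  (hf.integrable_mul hg).mul_bdd hχ.aestronglyMeasurable (ae_of_all _ hχ1)

lemma integrable_const_mul_sq_mul [IsFiniteMeasure μ] {f : Ω → ℝ} (hf : MemLp f 2 μ)
    (hχ : Measurable χ) (hχ1 : ∀ ω, |χ ω| ≤ 1) (c : ℝ) :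
    Integrable (fun ω => c * f ω ^ 2 * χ ω) μ := by
  simpa [mul_assoc, sq] using integrable_mul_mul_of_memLp_two (hf.const_mul c) hf hχ hχ1

variable [IsProbabilityMeasure μ]

lemma integral_const_mul_sq_const_add (hX : MemLp X 2 μ) (ρ s : ℝ) :
    ∫ ω, ρ ^ 2 * (s + X ω) ^ 2 ∂μ
      = ρ ^ 2 * s ^ 2 + 2 * ρ * s * (ρ * ∫ ω, X ω ∂μ) + ρ ^ 2 * ∫ ω, X ω ^ 2 ∂μ := by
  have h1 : Integrable (fun ω => 2 * ρ ^ 2 * s * X ω) μ := (hX.integrable one_le_two).const_mul _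
  have h01 : Integrable (fun ω => ρ ^ 2 * s ^ 2 + 2 * ρ ^ 2 * s * X ω) μ :=
    (integrable_const _).add h1
  calc ∫ ω, ρ ^ 2 * (s + X ω) ^ 2 ∂μ
      = ∫ ω, ρ ^ 2 * s ^ 2 + 2 * ρ ^ 2 * s * X ω + ρ ^ 2 * X ω ^ 2 ∂μ :=
        integral_congr_ae (ae_of_all _ fun ω => by ring)
    _ = _ := by
        rw [integral_add h01 (hX.integrable_sq.const_mul _), integral_add (integrable_const _) h1,
          integral_const, integral_const_mul, integral_const_mul]
        simp only [probReal_univ, one_smul]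
        ring

lemma integral_const_mul_sq_mul_eq (hX : MemLp X 2 μ) (hχ : Measurable χ) (hχ1 : ∀ ω, |χ ω| ≤ 1)
    (ρ s a b : ℝ) :
    ∫ ω, (2 * ρ * a + b) * (s + X ω) ^ 2 * χ ω ∂μ
      = 2 * ρ * s * ∫ ω, a * (s + X ω) * χ ω ∂μ
        + 2 * ρ * ∫ ω, a * (s + X ω) * X ω * χ ω ∂μ
        + ∫ ω, b * (s + X ω) ^ 2 * χ ω ∂μ := by
  have hZ : MemLp (fun ω => s + X ω) 2 μ := (memLp_const s).add hX
  have h1 : Integrable (fun ω => a * (s + X ω) * χ ω) μ := by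
    simpa using integrable_mul_mul_of_memLp_two (hZ.const_mul a) (memLp_const 1) hχ hχ1
  have h2 : Integrable (fun ω => a * (s + X ω) * X ω * χ ω) μ :=
    integrable_mul_mul_of_memLp_two (hZ.const_mul a) hX hχ hχ1
  have h12 : Integrable (fun ω => 2 * ρ * s * (a * (s + X ω) * χ ω)
      + 2 * ρ * (a * (s + X ω) * X ω * χ ω)) μ := (h1.const_mul _).add (h2.const_mul _)
  calc ∫ ω, (2 * ρ * a + b) * (s + X ω) ^ 2 * χ ω ∂μ
      = ∫ ω, 2 * ρ * s * (a * (s + X ω) * χ ω) + 2 * ρ * (a * (s + X ω) * X ω * χ ω)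
          + b * (s + X ω) ^ 2 * χ ω ∂μ :=
        integral_congr_ae (ae_of_all _ fun ω => by ring)
    _ = _ := by
        rw [integral_add h12 (integrable_const_mul_sq_mul hZ hχ hχ1 b),
          integral_add (h1.const_mul _) (h2.const_mul _), integral_const_mul, integral_const_mul]

lemma integral_piecewise_quadratic (hX : MemLp X 2 μ)
    (hχ : Measurable χ) (hχ1 : ∀ ω, |χ ω| ≤ 1) (hχ' : Measurable χ') (hχ'1 : ∀ ω, |χ' ω| ≤ 1)
    (ρ s a a' b b' : ℝ) :
    ∫ ω, ρ ^ 2 * (s + X ω) ^ 2 + (2 * ρ * a + b) * (s + X ω) ^ 2 * χ ω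
      + (2 * ρ * a' + b') * (s + X ω) ^ 2 * χ' ω ∂μ
      = ρ ^ 2 * s ^ 2 + 2 * ρ * s * (ρ * ∫ ω, X ω ∂μ) + ρ ^ 2 * ∫ ω, X ω ^ 2 ∂μ
        + (2 * ρ * s * ∫ ω, a * (s + X ω) * χ ω ∂μ
          + 2 * ρ * ∫ ω, a * (s + X ω) * X ω * χ ω ∂μ + ∫ ω, b * (s + X ω) ^ 2 * χ ω ∂μ)
        + (2 * ρ * s * ∫ ω, a' * (s + X ω) * χ' ω ∂μ
          + 2 * ρ * ∫ ω, a' * (s + X ω) * X ω * χ' ω ∂μ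
          + ∫ ω, b' * (s + X ω) ^ 2 * χ' ω ∂μ) := by
  have hZ : MemLp (fun ω => s + X ω) 2 μ := (memLp_const s).add hX
  have hZ2 : Integrable (fun ω => ρ ^ 2 * (s + X ω) ^ 2) μ := hZ.integrable_sq.const_mul _
  have hχpart : Integrable (fun ω => (2 * ρ * a + b) * (s + X ω) ^ 2 * χ ω) μ :=
    integrable_const_mul_sq_mul hZ hχ hχ1 _
  have hsum : Integrable (fun ω => ρ ^ 2 * (s + X ω) ^ 2
      + (2 * ρ * a + b) * (s + X ω) ^ 2 * χ ω) μ := hZ2.add hχpart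
  rw [integral_add hsum (integrable_const_mul_sq_mul hZ hχ' hχ'1 _),
    integral_add hZ2 hχpart, integral_const_mul_sq_const_add hX,
    integral_const_mul_sq_mul_eq hX hχ hχ1, integral_const_mul_sq_mul_eq hX hχ' hχ'1]

end

noncomputable def qFun (ρ' ap am bp bm y : ℝ) : ℝ :=
  ρ' ^ 2 * y ^ 2 + (2 * ρ' * ap + bp) * y ^ 2 * (if 0 ≤ y then (1:ℝ) else 0) +
    (2 * ρ' * am + bm) * y ^ 2 * (if y < 0 then (1:ℝ) else 0)

section qFun

variable {ρ' ap am bp bm : ℝ}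

lemma qRV_eq_qFun {Ω : Type*} {n : ℕ} {P : Ω → EuclideanSpace ℝ (Fin n)} {s Y : ℝ}
    {u : EuclideanSpace ℝ (Fin n)} {ω : Ω} :
    qRV P s ρ' ap am bp bm Y u ω = qFun ρ' ap am bp bm (s * Y + ⟪P ω, u⟫) :=
  rfl

lemma qFun_mul_of_nonneg {c : ℝ} (hc : 0 ≤ c) (z : ℝ) :
    qFun ρ' ap am bp bm (c * z) = c ^ 2 * qFun ρ' ap am bp bm z := by
  rcases hc.eq_or_lt with rfl | hc
  · simp [qFun]
  · have hlt : c * z < 0 ↔ z < 0 := by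
      simpa only [not_le] using (mul_nonneg_iff_of_pos_left hc).not
    simp only [qFun, mul_nonneg_iff_of_pos_left hc, hlt]
    ring

lemma qFun_neg (z : ℝ) :
    qFun ρ' ap am bp bm (-z) =
      ρ' ^ 2 * z ^ 2 + (2 * ρ' * ap + bp) * z ^ 2 * (if z ≤ 0 then (1:ℝ) else 0) +
        (2 * ρ' * am + bm) * z ^ 2 * (if 0 < z then (1:ℝ) else 0) := by
  simp only [qFun, neg_nonneg, neg_lt_zero, neg_sq]

end qFun

lemma abs_ite_one_zero_le_one (p : Prop) [Decidable p] : |(if p then (1:ℝ) else 0)| ≤ 1 := by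
  split_ifs <;> norm_num

lemma integrable_qFun_comp {Ω : Type*} [MeasurableSpace Ω] {μ : Measure Ω} [IsFiniteMeasure μ]
    {f : Ω → ℝ} (hf : MemLp f 2 μ) (hfm : Measurable f) (ρ' ap am bp bm : ℝ) :
    Integrable (fun ω => qFun ρ' ap am bp bm (f ω)) μ :=
  ((hf.integrable_sq.const_mul _).add (integrable_const_mul_sq_mul hf
    (Measurable.ite (measurableSet_le measurable_const hfm) measurable_const measurable_const)
    (fun _ => abs_ite_one_zero_le_one _) _)).add (integrable_const_mul_sq_mul hf
    (Measurable.ite (measurableSet_lt hfm measurable_const) measurable_const measurable_const)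
    (fun _ => abs_ite_one_zero_le_one _) _)

section policy

variable {Ω : Type*} {n : ℕ} {P : Ω → EuclideanSpace ℝ (Fin n)} {s ρ' ap am bp bm : ℝ}
  {Y : ℝ} {Kp Km : EuclideanSpace ℝ (Fin n)} {ω : Ω}

lemma uPol_of_nonneg (hY : 0 ≤ Y) : uPol Y Kp Km = Y • Kp := by
  simp [uPol, hY, hY.not_gt]

lemma uPol_of_neg (hY : Y < 0) : uPol Y Kp Km = Y • Km := by
  simp [uPol, hY, hY.not_ge]

lemma qRV_uPol_of_nonneg (hY : 0 ≤ Y) :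
    qRV P s ρ' ap am bp bm Y (uPol Y Kp Km) ω = Y ^ 2 * qFun ρ' ap am bp bm (s + ⟪P ω, Kp⟫) := by
  rw [qRV_eq_qFun, uPol_of_nonneg hY, real_inner_smul_right,
    ← qFun_mul_of_nonneg hY, mul_add, mul_comm s]

lemma qRV_uPol_of_neg (hY : Y < 0) :
    qRV P s ρ' ap am bp bm Y (uPol Y Kp Km) ω =
      Y ^ 2 * qFun ρ' ap am bp bm (-(s + ⟪P ω, Km⟫)) := by
  rw [qRV_eq_qFun, uPol_of_neg hY, real_inner_smul_right, ← neg_sq,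
    ← qFun_mul_of_nonneg (neg_nonneg.2 hY.le)]
  ring_nf

end policy

section inner

variable {Ω : Type*} [MeasurableSpace Ω] {ℙ : Measure Ω} [IsProbabilityMeasure ℙ] {n : ℕ}
  {P : Ω → EuclideanSpace ℝ (Fin n)} {s ρ' ap am bp bm : ℝ} {K : EuclideanSpace ℝ (Fin n)}

lemma integral_qFun_const_add_inner (hP : MemLp P 2 ℙ) (hPm : Measurable P) :
    ∫ ω, qFun ρ' ap am bp bm (s + ⟪P ω, K⟫) ∂ℙ =
      ρ' ^ 2 * s ^ 2 + 2 * ρ' * s * alphaPlus ℙ P s ρ' ap am K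
        + betaPlus ℙ P s ρ' ap am bp bm K := by
  have hZ : Measurable fun ω => s + ⟪P ω, K⟫ := measurable_const.add (hPm.inner measurable_const)
  simp only [qFun]
  rw [integral_piecewise_quadratic (hP.inner_const K)
    (Measurable.ite (measurableSet_le measurable_const hZ) measurable_const measurable_const)
    (fun _ => abs_ite_one_zero_le_one _)
    (Measurable.ite (measurableSet_lt hZ measurable_const) measurable_const measurable_const)
    (fun _ => abs_ite_one_zero_le_one _)]
  simp only [alphaPlus, betaPlus]
  ring

lemma integral_qFun_neg_const_add_inner (hP : MemLp P 2 ℙ) (hPm : Measurable P) :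
    ∫ ω, qFun ρ' ap am bp bm (-(s + ⟪P ω, K⟫)) ∂ℙ =
      ρ' ^ 2 * s ^ 2 + 2 * ρ' * s * alphaMinus ℙ P s ρ' ap am K
        + betaMinus ℙ P s ρ' ap am bp bm K := by
  have hZ : Measurable fun ω => s + ⟪P ω, K⟫ := measurable_const.add (hPm.inner measurable_const)
  simp only [qFun_neg]
  rw [integral_piecewise_quadratic (hP.inner_const K)
    (Measurable.ite (measurableSet_le hZ measurable_const) measurable_const measurable_const)
    (fun _ => abs_ite_one_zero_le_one _)
    (Measurable.ite (measurableSet_lt measurable_const hZ) measurable_const measurable_const)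
    (fun _ => abs_ite_one_zero_le_one _)]
  simp only [alphaMinus, betaMinus]
  ring

end inner

theorem expectation_q_eq_general {Ω : Type*} [MeasurableSpace Ω] (ℙ : Measure Ω)
    [IsProbabilityMeasure ℙ] {n : ℕ}
    (P : Ω → EuclideanSpace ℝ (Fin n)) (hmeas : Measurable P)
    (hL2 : Integrable (fun ω => ‖P ω‖ ^ 2) ℙ)
    (s ρ' ap am bp bm : ℝ) :
    ∀ (Y : ℝ) (Kp Km : EuclideanSpace ℝ (Fin n)),
      Integrable (fun ω => qRV P s ρ' ap am bp bm Y (uPol Y Kp Km) ω) ℙ ∧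
      (∫ ω, qRV P s ρ' ap am bp bm Y (uPol Y Kp Km) ω ∂ℙ) =
        ρ' ^ 2 * s ^ 2 * Y ^ 2 +
        (2 * ρ' * s * alphaPlus ℙ P s ρ' ap am Kp + betaPlus ℙ P s ρ' ap am bp bm Kp) *
          Y ^ 2 * (if 0 ≤ Y then (1:ℝ) else 0) +
        (2 * ρ' * s * alphaMinus ℙ P s ρ' ap am Km + betaMinus ℙ P s ρ' ap am bp bm Km) *
          Y ^ 2 * (if Y < 0 then (1:ℝ) else 0) := by
  intro Y Kp Km
  have hP : MemLp P 2 ℙ := (memLp_two_iff_integrable_sq_norm hmeas.aestronglyMeasurable).2 hL2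
  have hY' : MemLp (fun ω => s * Y + ⟪P ω, uPol Y Kp Km⟫) 2 ℙ :=
    (memLp_const (s * Y)).add (hP.inner_const _)
  refine ⟨integrable_qFun_comp hY'
    (measurable_const.add (hmeas.inner measurable_const)) ρ' ap am bp bm, ?_⟩
  rcases le_or_gt 0 Y with hY | hY
  · simp only [qRV_uPol_of_nonneg hY, integral_const_mul,
      integral_qFun_const_add_inner hP hmeas, if_pos hY, if_neg hY.not_gt]
    ring
  · simp only [qRV_uPol_of_neg hY, integral_const_mul,
      integral_qFun_neg_const_add_inner hP hmeas, if_pos hY, if_neg hY.not_ge]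
    ring

/-- For every `Y ∈ ℝ` and `K⁺, K⁻ ∈ ℝⁿ`, with `u = K⁺·Y·1{Y ≥ 0} + K⁻·Y·1{Y < 0}`
(so `Y' = sY + P'u`), the random variable `q` is integrable and
`E[q] = ρ'²s²·Y² + (2ρ's·α⁺(K⁺)+β⁺(K⁺))·Y²·1{Y ≥ 0} + (2ρ's·α⁻(K⁻)+β⁻(K⁻))·Y²·1{Y < 0}`. -/
theorem expectation_q_eq {Ω : Type*} [MeasurableSpace Ω] (ℙ : Measure Ω)
    [IsProbabilityMeasure ℙ] {n : ℕ} (hn : 1 ≤ n)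
    (P : Ω → EuclideanSpace ℝ (Fin n)) (hmeas : Measurable P)
    (hL2 : Integrable (fun ω => ‖P ω‖ ^ 2) ℙ)
    (s ρ' ap am bp bm : ℝ) (hs : 0 < s) (hρ : 0 < ρ') :
    ∀ (Y : ℝ) (Kp Km : EuclideanSpace ℝ (Fin n)),
      Integrable (fun ω => qRV P s ρ' ap am bp bm Y (uPol Y Kp Km) ω) ℙ ∧
      (∫ ω, qRV P s ρ' ap am bp bm Y (uPol Y Kp Km) ω ∂ℙ) =
        ρ' ^ 2 * s ^ 2 * Y ^ 2 +
        (2 * ρ' * s * alphaPlus ℙ P s ρ' ap am Kp + betaPlus ℙ P s ρ' ap am bp bm Kp) *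
          Y ^ 2 * (if 0 ≤ Y then (1:ℝ) else 0) +
        (2 * ρ' * s * alphaMinus ℙ P s ρ' ap am Km + betaMinus ℙ P s ρ' ap am bp bm Km) *
          Y ^ 2 * (if Y < 0 then (1:ℝ) else 0) :=
  expectation_q_eq_general ℙ P hmeas hL2 s ρ' ap am bp bm
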